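/- arXiv:2411.18244 — 5 statements merged into one kernel-verified Lean document; each statement's English description precedes it below -/
import Mathlib

section
/- Let n ≥ 3. Then the spectral radius of the power graph of the dihedral group of order 2n satisfies λ₁(P(D_{2n})) ≤ n. -/
/-!
Give the identity weight 2 and every other element weight 1. In the power graph of `D_{2n}` a
reflection is adjacent only to the identity, and a nontrivial rotation only to the other `n - 1`
rotations (the identity among them), so the adjacency matrix `A` satisfies `A w ≤ n • w`
entrywise; the identity itself has degree below `2n`. For a nonnegative matrix, a positive vector
with `A w ≤ c • w` bounds the modulus of every real eigenvalue by `c`.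
-/

open scoped Classical

noncomputable section

/-- The power graph of a (multiplicative) group: distinct `x, y` are adjacent iff one is
a natural-number power of the other. -/
def powerGraph (G : Type*) [Group G] : SimpleGraph G where
  Adj x y := x ≠ y ∧ ∃ m : ℕ, x = y ^ m ∨ y = x ^ m
  symm := by
    constructor
    rintro x y ⟨hxy, m, hm⟩
    exact ⟨hxy.symm, m, hm.symm⟩
  loopless := by
    constructor
    rintro x ⟨hx, -⟩
    exact hx rfl

open Matrix Finset

theorem Matrix.exists_mulVec_eq_smul_of_mem_spectrum {K n : Type*} [Field K] [Fintype n]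
    [DecidableEq n] {A : Matrix n n K} {μ : K} (hμ : μ ∈ spectrum K A) :
    ∃ v ≠ 0, A *ᵥ v = μ • v := by
  rw [← Matrix.spectrum_toLin'] at hμ
  obtain ⟨v, hv⟩ := (Module.End.hasEigenvalue_iff_mem_spectrum.mpr hμ).exists_hasEigenvector
  exact ⟨v, hv.2, hv.apply_eq_smul⟩

/-- The Collatz–Wielandt bound. -/
theorem Matrix.abs_le_of_mem_spectrum_of_mulVec_le {n : Type*} [Fintype n] [DecidableEq n]
    {A : Matrix n n ℝ} (hA : ∀ i j, 0 ≤ A i j) {w : n → ℝ} (hw : ∀ i, 0 < w i) {c : ℝ}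
    (hAw : ∀ i, (A *ᵥ w) i ≤ c * w i) {μ : ℝ} (hμ : μ ∈ spectrum ℝ A) :
    |μ| ≤ c := by
  obtain ⟨v, hv0, hv⟩ := exists_mulVec_eq_smul_of_mem_spectrum hμ
  obtain ⟨j, hj⟩ := Function.ne_iff.mp hv0
  obtain ⟨i, -, hi⟩ := exists_max_image univ (fun k => |v k| / w k) ⟨j, mem_univ j⟩
  set M := |v i| / w i
  have hvM : ∀ k, |v k| ≤ M * w k := fun k =>
    (div_le_iff₀ (hw k)).mp (hi k (mem_univ k))
  have hM : 0 < M := (div_pos (abs_pos.mpr hj) (hw j)).trans_le (hi j (mem_univ j))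
  have hvi : M * w i = |v i| := div_mul_cancel₀ _ (hw i).ne'
  refine le_of_mul_le_mul_right ?_ (hvi ▸ mul_pos hM (hw i))
  calc |μ| * |v i| = |∑ k, A i k * v k| := by
        rw [← abs_mul, ← smul_eq_mul, ← Pi.smul_apply, ← hv]; rfl
    _ ≤ ∑ k, A i k * |v k| := by
        refine (abs_sum_le_sum_abs _ _).trans_eq (sum_congr rfl fun k _ => ?_)
        rw [abs_mul, abs_of_nonneg (hA i k)]
    _ ≤ ∑ k, A i k * (M * w k) :=
        sum_le_sum fun k _ => mul_le_mul_of_nonneg_left (hvM k) (hA i k)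
    _ = M * (A *ᵥ w) i := by simp only [mulVec, dotProduct, mul_sum, mul_left_comm]
    _ ≤ M * (c * w i) := mul_le_mul_of_nonneg_left (hAw i) hM.le
    _ = c * |v i| := by rw [← hvi]; ring

theorem Finset.sum_ite_eq_two_one_le {α : Type*} [DecidableEq α] (s : Finset α) (a : α) :
    ∑ x ∈ s, (if x = a then 2 else 1 : ℝ) ≤ #s + 1 := by
  have hsplit : ∀ x, (if x = a then 2 else 1 : ℝ) = 1 + if x = a then 1 else 0 := by
    intro x; split_ifs <;> norm_num
  simp only [hsplit, sum_add_distrib, sum_const, nsmul_one, sum_ite_eq', add_le_add_iff_left]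
  split_ifs <;> norm_num

namespace DihedralGroup

variable {n : ℕ}

theorem sr_pow_eq_one_or_eq_sr (i : ZMod n) (m : ℕ) : sr i ^ m = 1 ∨ sr i ^ m = sr i := by
  rw [← pow_mod_orderOf, orderOf_sr]
  rcases Nat.mod_two_eq_zero_or_one m with h | h <;> simp [h]

theorem eq_one_of_powerGraph_adj_sr {i : ZMod n} {x : DihedralGroup n}
    (h : (powerGraph (DihedralGroup n)).Adj (sr i) x) : x = 1 := by
  obtain ⟨hne, m, hm | hm⟩ := h
  · cases x with
    | r j => simp [r_pow] at hm
    | sr j =>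
      rcases sr_pow_eq_one_or_eq_sr j m with h | h <;> rw [h] at hm
      · rw [one_def] at hm; cases hm
      · exact absurd hm hne
  · rcases sr_pow_eq_one_or_eq_sr i m with h | h <;> rw [h] at hm
    · exact hm
    · exact absurd hm.symm hne

theorem exists_eq_r_of_powerGraph_adj_r {i : ZMod n} {x : DihedralGroup n} (hi : i ≠ 0)
    (h : (powerGraph (DihedralGroup n)).Adj (r i) x) : ∃ j ≠ i, x = r j := by
  obtain ⟨hne, m, hm | hm⟩ := h
  · cases x with
    | r j => exact ⟨j, fun hji => hne (hji ▸ rfl), rfl⟩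
    | sr j =>
      rcases sr_pow_eq_one_or_eq_sr j m with h | h <;> rw [h] at hm
      · rw [one_def, r.injEq] at hm; exact absurd hm hi
      · cases hm
  · rw [r_pow] at hm
    exact ⟨_, fun h => hne (by rw [hm, h]), hm⟩

variable [NeZero n]

theorem powerGraph_degree_sr_le (i : ZMod n) :
    (powerGraph (DihedralGroup n)).degree (sr i) ≤ 1 := by
  rw [← SimpleGraph.card_neighborFinset_eq_degree, ← card_singleton (1 : DihedralGroup n)]
  exact card_le_card fun x hx =>
    mem_singleton.mpr (eq_one_of_powerGraph_adj_sr ((SimpleGraph.mem_neighborFinset _ _ _).mp hx))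

theorem powerGraph_degree_r_add_one_le {i : ZMod n} (hi : i ≠ 0) :
    (powerGraph (DihedralGroup n)).degree (r i) + 1 ≤ n := by
  rw [← SimpleGraph.card_neighborFinset_eq_degree]
  calc _ ≤ #((univ.erase i).image r) + 1 := by
          gcongr
          intro x hx
          obtain ⟨j, hji, rfl⟩ := exists_eq_r_of_powerGraph_adj_r hi
            ((SimpleGraph.mem_neighborFinset _ _ _).mp hx)
          exact mem_image_of_mem r (mem_erase.mpr ⟨hji, mem_univ j⟩)
    _ ≤ #(univ.erase i) + 1 := by gcongr; exact card_image_le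
    _ = n := by rw [card_erase_add_one (mem_univ i), card_univ, ZMod.card]

theorem powerGraph_adjMatrix_mulVec_le (hn : 2 ≤ n) (x : DihedralGroup n) :
    ((powerGraph (DihedralGroup n)).adjMatrix ℝ *ᵥ fun y => if y = 1 then 2 else 1) x ≤
      n * if x = 1 then 2 else 1 := by
  rw [SimpleGraph.adjMatrix_mulVec_apply]
  refine (sum_ite_eq_two_one_le _ _).trans ?_
  rw [SimpleGraph.card_neighborFinset_eq_degree]
  have hn' : (2 : ℝ) ≤ n := by exact_mod_cast hn
  by_cases hx : x = 1
  · have hdeg : ((powerGraph (DihedralGroup n)).degree x : ℝ) + 1 ≤ 2 * n := by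
      exact_mod_cast ((powerGraph (DihedralGroup n)).degree_lt_card_verts x).trans_eq card
    rw [if_pos hx]
    linarith
  rw [if_neg hx, mul_one]
  cases x with
  | r i =>
    have hi : i ≠ 0 := by rintro rfl; exact hx r_zero
    have hdeg : ((powerGraph (DihedralGroup n)).degree (r i) : ℝ) + 1 ≤ n := by
      exact_mod_cast powerGraph_degree_r_add_one_le hi
    linarith
  | sr i =>
    have hdeg : ((powerGraph (DihedralGroup n)).degree (sr i) : ℝ) ≤ 1 := by
      exact_mod_cast powerGraph_degree_sr_le i
    linarith

end DihedralGroup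

/-- Spectral-radius upper bound for the power graph of the dihedral group of order `2n`. -/
theorem spectralRadius_powerGraph_dihedral_upper_bound
    (n : ℕ) [NeZero n] (hn : 3 ≤ n) (lam : ℝ)
    (hlam : IsGreatest (spectrum ℝ ((powerGraph (DihedralGroup n)).adjMatrix ℝ)) lam) :
    lam ≤ (n : ℝ) := by
  refine (le_abs_self lam).trans (abs_le_of_mem_spectrum_of_mulVec_le (fun i j => ?_) (fun x => ?_)
    (DihedralGroup.powerGraph_adjMatrix_mulVec_le (by omega)) hlam.1)
  · rw [SimpleGraph.adjMatrix_apply]; split_ifs <;> norm_num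
  · split_ifs <;> norm_num
end
end

section
/- Let n ≥ 2 and let D_avg = (∑_{v ∈ ZMod 2n} deg(v)) / (2n) be the average degree of the power graph P(C_{2n}) of the cyclic group ZMod 2n. Then the spectral radius of the power graph of the dicyclic group of order 4n satisfies λ₁(P(Q_{4n})) ≥ ((D_avg + 1) + √((D_avg − 1)² + 16)) / 2. -/
/-!
Evaluate the Rayleigh quotient of the adjacency matrix of `P(Q₄ₙ)` at the vector that is `s` on
the cyclic subgroup `⟨a 1⟩` and `t` on its coset `{xa j}`. Inside `⟨a 1⟩` the power graph is that
of `ZMod (2n)`; `a 0` and `a n` are adjacent to every `xa j`, and `xa j` is adjacent to no other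
`xa` than `xa (j + n)`. So the quadratic form is `2n (D s² + 4 s t + t²)` with `D` the average
degree, and the best choice of `(s, t)` yields the larger eigenvalue of `!![D, 2; 2, 1]`.
-/

open scoped Classical

noncomputable section

/-- The power graph of an additive group: distinct `x, y` are adjacent iff one is a
natural-number multiple (additive power) of the other. -/
def addPowerGraph (G : Type*) [AddGroup G] : SimpleGraph G where
  Adj x y := x ≠ y ∧ ∃ m : ℕ, x = m • y ∨ y = m • x
  symm := by
    constructor
    rintro x y ⟨hxy, m, hm⟩
    exact ⟨hxy.symm, m, hm.symm⟩
  loopless := by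
    constructor
    rintro x ⟨hx, -⟩
    exact hx rfl

open Matrix

namespace ZMod

variable {n : ℕ}

theorem natCast_half_add_self : (n : ZMod (2 * n)) + n = 0 := by
  rw [← Nat.cast_add, ← two_mul, natCast_self]

theorem natCast_half_ne_zero [NeZero n] : (n : ZMod (2 * n)) ≠ 0 := by
  rw [Ne, natCast_eq_zero_iff]
  exact Nat.not_dvd_of_pos_of_lt (NeZero.pos n) (by have := NeZero.pos n; omega)

theorem sum_ite_eq_zero_or_natCast_half [NeZero n] {M : Type*} [AddCommMonoid M] (c : M) :
    (∑ i : ZMod (2 * n), if i = 0 ∨ i = n then c else 0) = 2 • c := by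
  have hfilter : (Finset.univ.filter fun i : ZMod (2 * n) => i = 0 ∨ i = n) =
      {0, (n : ZMod (2 * n))} := by
    ext; simp
  rw [Finset.sum_ite, Finset.sum_const_zero, add_zero, Finset.sum_const, hfilter,
    Finset.card_pair natCast_half_ne_zero.symm]

end ZMod

namespace QuaternionGroup

variable {n : ℕ}

theorem a_pow (i : ZMod (2 * n)) (m : ℕ) : a i ^ m = a (m • i) := by
  induction m with
  | zero => rw [pow_zero, zero_nsmul, one_def]
  | succ k ih => rw [pow_succ, ih, a_mul_a, succ_nsmul]

theorem xa_pow_three (j : ZMod (2 * n)) : xa j ^ 3 = xa (j + (n : ZMod (2 * n))) := by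
  rw [pow_succ', xa_sq, xa_mul_a]

theorem exists_eq_xa_pow_iff (j : ZMod (2 * n)) (g : QuaternionGroup n) :
    (∃ m : ℕ, g = xa j ^ m) ↔ g = a 0 ∨ g = a n ∨ g = xa j ∨ g = xa (j + (n : ZMod (2 * n))) := by
  constructor
  · rintro ⟨m, rfl⟩
    rw [pow_eq_pow_mod m (xa_pow_four j)]
    have : m % 4 < 4 := Nat.mod_lt m (by norm_num)
    interval_cases m % 4
    · simp [-a_zero, one_def]
    · simp
    · simp [xa_sq]
    · simp [xa_pow_three]
  · rintro (rfl | rfl | rfl | rfl)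
    exacts [⟨0, one_def.symm⟩, ⟨2, (xa_sq j).symm⟩, ⟨1, (pow_one _).symm⟩,
      ⟨3, (xa_pow_three j).symm⟩]

theorem powerGraph_adj_a_a (i j : ZMod (2 * n)) :
    (powerGraph (QuaternionGroup n)).Adj (a i) (a j) ↔ (addPowerGraph (ZMod (2 * n))).Adj i j := by
  simp only [powerGraph, addPowerGraph, a_pow, ne_eq, a.injEq]

theorem powerGraph_adj_a_xa (i j : ZMod (2 * n)) :
    (powerGraph (QuaternionGroup n)).Adj (a i) (xa j) ↔ i = 0 ∨ i = n := by
  have h := exists_eq_xa_pow_iff j (a i)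
  simp only [a.injEq, reduceCtorEq, or_false] at h
  simp [powerGraph, a_pow, exists_or, h]

theorem powerGraph_adj_xa_xa [NeZero n] (i j : ZMod (2 * n)) :
    (powerGraph (QuaternionGroup n)).Adj (xa i) (xa j) ↔ j = i + n := by
  have hi := exists_eq_xa_pow_iff j (xa i)
  have hj := exists_eq_xa_pow_iff i (xa j)
  simp only [xa.injEq, reduceCtorEq, false_or] at hi hj
  simp only [powerGraph, ne_eq, xa.injEq, exists_or, hi, hj]
  have hswap : i = j + n ↔ j = i + n := by
    constructor <;> intro h <;> linear_combination -h - ZMod.natCast_half_add_self (n := n)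
  have hne : j = i + n → i ≠ j := fun h hij =>
    ZMod.natCast_half_ne_zero (n := n) (by linear_combination -h - hij)
  grind

def equivSum : ZMod (2 * n) ⊕ ZMod (2 * n) ≃ QuaternionGroup n where
  toFun := Sum.elim a xa
  invFun
    | a i => .inl i
    | xa j => .inr j
  left_inv := by rintro (i | j) <;> rfl
  right_inv := by rintro (i | j) <;> rfl

theorem sum_univ [NeZero n] {M : Type*} [AddCommMonoid M] (f : QuaternionGroup n → M) :
    ∑ g, f g = ∑ i, f (a i) + ∑ j, f (xa j) := by
  rw [← equivSum.sum_comp, Fintype.sum_sum_type]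
  rfl

def blockVector {α : Type*} (s t : α) : QuaternionGroup n → α
  | a _ => s
  | xa _ => t

theorem blockVector_dotProduct_self [NeZero n] (s t : ℝ) :
    blockVector (n := n) s t ⬝ᵥ blockVector s t = 2 * n * (s ^ 2 + t ^ 2) := by
  simp only [dotProduct, blockVector, sum_univ, Finset.sum_const, Finset.card_univ, ZMod.card,
    nsmul_eq_mul, Nat.cast_mul, Nat.cast_ofNat]
  ring

theorem blockVector_dotProduct_adjMatrix_mulVec [NeZero n] (s t : ℝ) :
    blockVector s t ⬝ᵥ (powerGraph (QuaternionGroup n)).adjMatrix ℝ *ᵥ blockVector s t =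
      (∑ i : ZMod (2 * n), ((addPowerGraph (ZMod (2 * n))).degree i : ℝ)) * s ^ 2
        + 8 * n * (s * t) + 2 * n * t ^ 2 := by
  simp only [SimpleGraph.dotProduct_mulVec_adjMatrix, sum_univ, blockVector, powerGraph_adj_a_a,
    powerGraph_adj_a_xa, powerGraph_adj_xa_xa, (powerGraph _).adj_comm (xa _) (a _)]
  have hdeg (i : ZMod (2 * n)) :
      (∑ j, if (addPowerGraph (ZMod (2 * n))).Adj i j then s * s else 0) =
        (addPowerGraph (ZMod (2 * n))).degree i * (s * s) := by
    simp only [SimpleGraph.degree_eq_sum_if_adj, Finset.sum_mul, ite_mul, one_mul, zero_mul]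
  simp only [hdeg, Finset.sum_ite_irrel, Finset.sum_const, Finset.card_univ, ZMod.card,
    nsmul_eq_mul, Nat.cast_mul, Nat.cast_ofNat, Finset.sum_add_distrib,
    ← Finset.sum_mul, ZMod.sum_ite_eq_zero_or_natCast_half, Finset.sum_ite_eq', Finset.mem_univ,
    ↓reduceIte, smul_add, mul_zero]
  ring

end QuaternionGroup

theorem exists_quadForm_eq_largerEigenvalue (p r : ℝ) {q : ℝ} (hq : q ≠ 0) :
    ∃ s t : ℝ, 0 < s ^ 2 + t ^ 2 ∧ p * s ^ 2 + 2 * q * (s * t) + r * t ^ 2 =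
      ((p + r) + √((p - r) ^ 2 + 4 * q ^ 2)) / 2 * (s ^ 2 + t ^ 2) := by
  set R := √((p - r) ^ 2 + 4 * q ^ 2)
  have hR : R ^ 2 = (p - r) ^ 2 + 4 * q ^ 2 := Real.sq_sqrt (by positivity)
  -- `(q, L - p)` is an eigenvector of `!![p, q; q, r]` for its larger eigenvalue `L`.
  refine ⟨q, ((p + r) + R) / 2 - p, by positivity, ?_⟩
  linear_combination (-(((p + r) + R) / 2 - p) / 4) * hR

theorem Matrix.IsHermitian.dotProduct_mulVec_le {ι : Type*} [Fintype ι] [DecidableEq ι]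
    {A : Matrix ι ι ℝ} (hA : A.IsHermitian) {lam : ℝ} (hlam : lam ∈ upperBounds (spectrum ℝ A))
    (x : ι → ℝ) : x ⬝ᵥ (A *ᵥ x) ≤ lam * (x ⬝ᵥ x) := by
  have hpsd : (algebraMap ℝ _ lam - A).PosSemidef := by
    refine posSemidef_iff_isHermitian_and_spectrum_nonneg.mpr ⟨?_, ?_⟩
    · rw [Algebra.algebraMap_eq_smul_one]
      exact ((isHermitian_one (α := ℝ)).smul (IsSelfAdjoint.all lam)).sub hA
    · rw [← spectrum.singleton_sub_eq]
      rintro _ ⟨_, rfl, μ, hμ, rfl⟩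
      exact sub_nonneg.mpr (hlam hμ)
  simpa [Algebra.algebraMap_eq_smul_one, sub_mulVec, dotProduct_sub, smul_mulVec]
    using hpsd.dotProduct_mulVec_nonneg x

open QuaternionGroup in
theorem spectralRadius_powerGraph_dicyclic_lower_bound_general
    (n : ℕ) [NeZero n] (lam Davg : ℝ)
    (hlam : IsGreatest (spectrum ℝ ((powerGraph (QuaternionGroup n)).adjMatrix ℝ)) lam)
    (hDavg : Davg =
      (∑ v : ZMod (2 * n), ((addPowerGraph (ZMod (2 * n))).degree v : ℝ)) / (2 * (n : ℝ))) :
    ((Davg + 1) + Real.sqrt ((Davg - 1) ^ 2 + 16)) / 2 ≤ lam := by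
  obtain ⟨s, t, hst, hform⟩ := exists_quadForm_eq_largerEigenvalue Davg 1 two_ne_zero
  norm_num at hform
  have hn : (0 : ℝ) < n := by exact_mod_cast NeZero.pos n
  have hsum : ∑ v : ZMod (2 * n), ((addPowerGraph (ZMod (2 * n))).degree v : ℝ) = 2 * n * Davg := by
    rw [hDavg]; field_simp
  have hray := (powerGraph (QuaternionGroup n)).isHermitian_adjMatrix (R := ℝ)
    |>.dotProduct_mulVec_le hlam.2 (blockVector s t)
  rw [blockVector_dotProduct_adjMatrix_mulVec, blockVector_dotProduct_self, hsum] at hray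
  refine le_of_mul_le_mul_right (hray.trans_eq' ?_)
    (by positivity : 0 < 2 * (n : ℝ) * (s ^ 2 + t ^ 2))
  linear_combination 2 * n * hform

/-- Spectral-radius lower bound for the power graph of the dicyclic group of order `4n`,
in terms of the average degree of the power graph of `ZMod (2n)`. -/
theorem spectralRadius_powerGraph_dicyclic_lower_bound
    (n : ℕ) [NeZero n] (hn : 2 ≤ n) (lam Davg : ℝ)
    (hlam : IsGreatest (spectrum ℝ ((powerGraph (QuaternionGroup n)).adjMatrix ℝ)) lam)
    (hDavg : Davg =
      (∑ v : ZMod (2 * n), ((addPowerGraph (ZMod (2 * n))).degree v : ℝ)) / (2 * (n : ℝ))) :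
    ((Davg + 1) + Real.sqrt ((Davg - 1) ^ 2 + 16)) / 2 ≤ lam :=
  spectralRadius_powerGraph_dicyclic_lower_bound_general n lam Davg hlam hDavg
end
end

section
/- Let n ≥ 3 be a natural number that is not prime (so the set V₂ of elements of ZMod n that are neither 0 nor additive generators is nonempty), let l = φ(n) + 1, and let Tr_max = max_{v ∈ V₂} Tr(v) be the maximum transmission in the power graph P(C_n) over the elements of V₂. Then the distance spectral radius satisfies ρ₁(P(C_n)) ≤ ((Tr_max − 1) + √((Tr_max − 2l + 1)² + 4l(n − l))) / 2. -/
open scoped Classical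

noncomputable section

def distMatrix {V : Type*} [Fintype V] (G : SimpleGraph V) : Matrix V V ℝ :=
  fun x y => (G.dist x y : ℝ)

def transmission {V : Type*} [Fintype V] (G : SimpleGraph V) (v : V) : ℕ :=
  ∑ w, G.dist v w

/-! The identity and the `φ(n)` generators of `C_n` are adjacent to every other vertex of the
power graph. With `l = φ(n) + 1` such universal vertices, distance matrix `D` and `r` the claimed
bound, the positive vector `y` equal to `n - l` on the universal vertices and to `r - l + 1`
elsewhere satisfies `D y ≤ r y` entrywise: on a universal vertex this is an equality, and on any
other vertex `v` it reduces to `Tr(v) ≤ Tr_max` together with the quadratic equation defining `r`.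
As `D` is nonnegative, the Collatz–Wielandt argument then bounds every real eigenvalue of `D`
by `r`. -/

open Finset Matrix

namespace Matrix

variable {V : Type*} [Fintype V] {M : Matrix V V ℝ} {y : V → ℝ} {r : ℝ}

/-- Collatz–Wielandt: compare `v` with `y` at an index maximising `|v i| / y i`. -/
theorem abs_le_of_mulVec_le (hM : ∀ i j, 0 ≤ M i j) (hy : ∀ i, 0 < y i)
    (hMy : ∀ i, (M *ᵥ y) i ≤ r * y i) {v : V → ℝ} (hv : v ≠ 0) {μ : ℝ}
    (hMv : M *ᵥ v = μ • v) : |μ| ≤ r := by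
  obtain ⟨j, hj⟩ := Function.ne_iff.mp hv
  obtain ⟨i, -, hi⟩ := exists_max_image univ (fun k => |v k| / y k) ⟨j, mem_univ j⟩
  set c := |v i| / y i
  have hc : 0 < c := (div_pos (abs_pos.mpr hj) (hy j)).trans_le (hi j (mem_univ j))
  have hvc : ∀ k, |v k| ≤ c * y k := fun k => (div_le_iff₀ (hy k)).mp (hi k (mem_univ k))
  have hvi : |v i| = c * y i := (div_mul_cancel₀ _ (hy i).ne').symm
  have key : |μ| * (c * y i) ≤ r * (c * y i) :=
    calc |μ| * (c * y i) = |(M *ᵥ v) i| := by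
          rw [hMv, ← hvi, Pi.smul_apply, smul_eq_mul, abs_mul]
      _ ≤ ∑ k, M i k * |v k| := by
        simp only [mulVec, dotProduct]
        refine (abs_sum_le_sum_abs _ _).trans_eq (sum_congr rfl fun k _ => ?_)
        rw [abs_mul, abs_of_nonneg (hM i k)]
      _ ≤ ∑ k, M i k * (c * y k) :=
        sum_le_sum fun k _ => mul_le_mul_of_nonneg_left (hvc k) (hM i k)
      _ = c * (M *ᵥ y) i := by
        simp only [mulVec, dotProduct, mul_sum]
        exact sum_congr rfl fun k _ => by ring
      _ ≤ c * (r * y i) := mul_le_mul_of_nonneg_left (hMy i) hc.le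
      _ = r * (c * y i) := by ring
  exact le_of_mul_le_mul_right key (mul_pos hc (hy i))

theorem le_of_mem_spectrum_of_mulVec_le [DecidableEq V] (hM : ∀ i j, 0 ≤ M i j)
    (hy : ∀ i, 0 < y i) (hMy : ∀ i, (M *ᵥ y) i ≤ r * y i) {μ : ℝ} (hμ : μ ∈ spectrum ℝ M) :
    μ ≤ r := by
  rw [← spectrum_toLin', ← Module.End.hasEigenvalue_iff_mem_spectrum] at hμ
  obtain ⟨v, hv⟩ := hμ.exists_hasEigenvector
  have hMv : M *ᵥ v = μ • v := by
    rw [← toLin'_apply]; exact Module.End.mem_eigenspace_iff.mp hv.1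
  exact (le_abs_self μ).trans (abs_le_of_mulVec_le hM hy hMy hv.2 hMv)

end Matrix

/-- The larger root of `(x - T + l) * (x - l + 1) = l * (n - l)`. -/
def distSpectralBound (T l n : ℝ) : ℝ :=
  ((T - 1) + √((T - 2 * l + 1) ^ 2 + 4 * l * (n - l))) / 2

section distSpectralBound

variable {T l n : ℝ}

lemma distSpectralBound_sub_add_one_pos (hl : 0 < l) (hln : l < n) :
    0 < distSpectralBound T l n - l + 1 := by
  have hlt : |T - 2 * l + 1| < √((T - 2 * l + 1) ^ 2 + 4 * l * (n - l)) := by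
    rw [Real.lt_sqrt (abs_nonneg _), sq_abs]
    nlinarith
  unfold distSpectralBound
  linarith [neg_abs_le (T - 2 * l + 1)]

lemma distSpectralBound_mul_eq (hl : 0 < l) (hln : l < n) :
    distSpectralBound T l n * (distSpectralBound T l n - l + 1)
      = l * (n - l) + (T - l) * (distSpectralBound T l n - l + 1) := by
  have hsq := Real.sq_sqrt (by nlinarith [sq_nonneg (T - 2 * l + 1)] :
    0 ≤ (T - 2 * l + 1) ^ 2 + 4 * l * (n - l))
  unfold distSpectralBound
  linear_combination (1 / 4 : ℝ) * hsq

end distSpectralBound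

namespace SimpleGraph

variable {V : Type*} {G : SimpleGraph V}

def IsUniversalVertex (G : SimpleGraph V) (v : V) : Prop :=
  ∀ ⦃w⦄, v ≠ w → G.Adj v w

lemma IsUniversalVertex.dist_eq_one {v w : V} (hv : G.IsUniversalVertex v) (h : v ≠ w) :
    G.dist v w = 1 :=
  dist_eq_one_iff_adj.mpr (hv h)

lemma IsUniversalVertex.dist_eq_one' {v w : V} (hv : G.IsUniversalVertex v) (h : w ≠ v) :
    G.dist w v = 1 := by
  rw [dist_comm]; exact hv.dist_eq_one h.symm

variable [Fintype V]

lemma IsUniversalVertex.distMatrix_mulVec_apply {v : V} (hv : G.IsUniversalVertex v)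
    (y : V → ℝ) : (distMatrix G *ᵥ y) v = ∑ w, y w - y v := by
  classical
  rw [mulVec, dotProduct, ← add_sum_erase _ _ (mem_univ v), ← add_sum_erase _ _ (mem_univ v)]
  simp only [distMatrix, dist_self, Nat.cast_zero, zero_mul, zero_add, add_sub_cancel_left]
  refine sum_congr rfl fun w hw => ?_
  rw [hv.dist_eq_one (ne_of_mem_erase hw).symm, Nat.cast_one, one_mul]

variable [DecidableEq V] {S : Finset V}

lemma transmission_eq_card_add_sum_compl (hS : ∀ u ∈ S, G.IsUniversalVertex u) {w : V}
    (hw : w ∉ S) : transmission G w = #S + ∑ z ∈ Sᶜ, G.dist w z := by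
  rw [transmission, ← sum_add_sum_compl S, card_eq_sum_ones]
  congr 1
  exact sum_congr rfl fun z hz => (hS z hz).dist_eq_one' (ne_of_mem_of_not_mem hz hw).symm

lemma distMatrix_mulVec_piecewise_apply (hS : ∀ u ∈ S, G.IsUniversalVertex u) {w : V}
    (hw : w ∉ S) (a b : ℝ) :
    (distMatrix G *ᵥ S.piecewise (fun _ => a) (fun _ => b)) w
      = #S * a + (transmission G w - #S) * b := by
  have hSum : ∑ z ∈ S, distMatrix G w z * S.piecewise (fun _ => a) (fun _ => b) z = #S * a := by
    rw [← nsmul_eq_mul, ← sum_const]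
    refine sum_congr rfl fun z hz => ?_
    rw [piecewise_eq_of_mem _ _ _ hz, distMatrix,
      (hS z hz).dist_eq_one' (ne_of_mem_of_not_mem hz hw).symm, Nat.cast_one, one_mul]
  have hSumCompl : ∑ z ∈ Sᶜ, distMatrix G w z * S.piecewise (fun _ => a) (fun _ => b) z
      = (∑ z ∈ Sᶜ, G.dist w z : ℕ) * b := by
    rw [Nat.cast_sum, sum_mul]
    exact sum_congr rfl fun z hz => by rw [piecewise_eq_of_notMem _ _ _ (mem_compl.mp hz)]; rfl
  rw [transmission_eq_card_add_sum_compl hS hw, mulVec, dotProduct, ← sum_add_sum_compl S,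
    hSum, hSumCompl]
  push_cast
  ring

theorem le_distSpectralBound_of_isUniversalVertex
    (hS : ∀ u ∈ S, G.IsUniversalVertex u) (hS₀ : S.Nonempty) (hSV : #S < Fintype.card V)
    {T : ℝ} (hT : ∀ w ∉ S, (transmission G w : ℝ) ≤ T) {μ : ℝ}
    (hμ : μ ∈ spectrum ℝ (distMatrix G)) : μ ≤ distSpectralBound T #S (Fintype.card V) := by
  set l : ℝ := (#S : ℝ)
  set n : ℝ := (Fintype.card V : ℝ)
  set r := distSpectralBound T l n
  have hl : 0 < l := Nat.cast_pos.mpr hS₀.card_pos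
  have hln : l < n := Nat.cast_lt.mpr hSV
  have hq := distSpectralBound_sub_add_one_pos (T := T) hl hln
  set y := S.piecewise (fun _ => n - l) (fun _ => r - l + 1) with hy
  have hyS : ∀ w ∈ S, y w = n - l := fun w hw => piecewise_eq_of_mem _ _ _ hw
  have hySc : ∀ w ∉ S, y w = r - l + 1 := fun w hw => piecewise_eq_of_notMem _ _ _ hw
  refine le_of_mem_spectrum_of_mulVec_le (M := distMatrix G) (y := y)
    (fun _ _ => Nat.cast_nonneg _) (fun w => ?_) (fun w => ?_) hμ
  · by_cases hw : w ∈ S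
    · rw [hyS w hw]; linarith
    · rw [hySc w hw]; exact hq
  by_cases hw : w ∈ S
  · have hsum : ∑ z, y z = l * (n - l) + (n - l) * (r - l + 1) := by
      rw [sum_piecewise, univ_inter, ← compl_eq_univ_sdiff, sum_const, sum_const, card_compl,
        nsmul_eq_mul, nsmul_eq_mul, Nat.cast_sub hSV.le]
    rw [(hS w hw).distMatrix_mulVec_apply, hsum, hyS w hw]
    linarith
  · rw [hy, distMatrix_mulVec_piecewise_apply hS hw, ← hy, hySc w hw,
      distSpectralBound_mul_eq hl hln]
    gcongr
    exact hT w hw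

end SimpleGraph

lemma addPowerGraph_isUniversalVertex_zero (G : Type*) [AddGroup G] :
    (addPowerGraph G).IsUniversalVertex 0 :=
  fun w h => ⟨h, 0, Or.inl (zero_nsmul w).symm⟩

lemma addPowerGraph_isUniversalVertex_of_addOrderOf_eq_card {G : Type*} [AddGroup G] [Finite G]
    {g : G} (hg : addOrderOf g = Nat.card G) : (addPowerGraph G).IsUniversalVertex g := by
  intro w h
  have htop : AddSubgroup.zmultiples g = ⊤ :=
    AddSubgroup.eq_top_of_card_eq _ (by rw [Nat.card_zmultiples, hg])
  obtain ⟨m, hm⟩ : w ∈ AddSubmonoid.multiples g := by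
    rw [mem_multiples_iff_mem_zmultiples, htop]; trivial
  exact ⟨h, m, Or.inr hm.symm⟩

lemma IsAddCyclic.card_filter_eq_zero_or_addOrderOf_eq_card (G : Type*) [AddGroup G] [Fintype G]
    [DecidableEq G] [IsAddCyclic G] [Nontrivial G] :
    #{v : G | v = 0 ∨ addOrderOf v = Fintype.card G} = Nat.totient (Fintype.card G) + 1 := by
  rw [filter_or, card_union_of_disjoint, filter_eq', if_pos (mem_univ _), card_singleton,
    IsAddCyclic.card_addOrderOf_eq_totient dvd_rfl, add_comm]
  rw [disjoint_filter]
  rintro v - rfl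
  rw [addOrderOf_zero]
  exact Fintype.one_lt_card.ne

/-- Distance-spectral-radius upper bound for the power graph of `ZMod n`, in terms of the
maximum transmission of the non-identity non-generator elements. -/
theorem distSpectralRadius_powerGraph_cyclic_upper_bound
    (n : ℕ) [NeZero n] (hn : 3 ≤ n) (hnp : ¬ n.Prime) (rho l trmax : ℝ)
    (hrho : IsGreatest (spectrum ℝ (distMatrix (addPowerGraph (ZMod n)))) rho)
    (hl : l = (Nat.totient n : ℝ) + 1)
    (htrmax : trmax =
      (((Finset.univ.filter (fun v : ZMod n => v ≠ 0 ∧ addOrderOf v ≠ n)).sup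
        (transmission (addPowerGraph (ZMod n))) : ℕ) : ℝ)) :
    rho ≤ ((trmax - 1) + Real.sqrt ((trmax - 2 * l + 1) ^ 2 + 4 * l * ((n : ℝ) - l))) / 2 := by
  have : Nontrivial (ZMod n) := ZMod.nontrivial_iff.mpr (by omega)
  set S := Finset.univ.filter (fun v : ZMod n => v = 0 ∨ addOrderOf v = n)
  have hScard : #S = Nat.totient n + 1 := by
    simpa [ZMod.card] using IsAddCyclic.card_filter_eq_zero_or_addOrderOf_eq_card (ZMod n)
  have hSn : #S < n := by
    have := Nat.totient_lt n (by omega)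
    have := mt (Nat.totient_eq_iff_prime (by omega)).mp hnp
    omega
  have hSuniv : ∀ u ∈ S, (addPowerGraph (ZMod n)).IsUniversalVertex u := by
    intro u hu
    rcases (mem_filter.mp hu).2 with rfl | hu
    · exact addPowerGraph_isUniversalVertex_zero _
    · exact addPowerGraph_isUniversalVertex_of_addOrderOf_eq_card (by rw [hu, Nat.card_zmod])
  have htr : ∀ w ∉ S, (transmission (addPowerGraph (ZMod n)) w : ℝ) ≤ trmax := by
    intro w hw
    rw [htrmax, Nat.cast_le]
    exact le_sup (mem_filter.mpr ⟨mem_univ w, by simpa [S, not_or] using hw⟩)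
  have hbound := SimpleGraph.le_distSpectralBound_of_isUniversalVertex hSuniv ⟨0, by simp [S]⟩
    (by rwa [ZMod.card]) htr hrho.1
  rwa [hScard, ZMod.card, Nat.cast_add, Nat.cast_one, ← hl] at hbound
end
end

section
/- Let n ≥ 3 be a natural number that is not prime, let l = φ(n) + 1, let V₂ be the (nonempty) set of elements of ZMod n that are neither 0 nor additive generators, and let Tr_avg = (∑_{v ∈ V₂} Tr(v)) / (n − l) and Tr_max = max_{v ∈ V₂} Tr(v) be the average and maximum transmissions of these elements in the power graph P(C_n). Then ρ₁(P(C_n)) = ((Tr_avg − 1) + √((Tr_avg − 2l + 1)² + 4l(n − l))) / 2 and ρ₁(P(C_n)) = ((Tr_max − 1) + √((Tr_max − 2l + 1)² + 4l(n − l))) / 2 both hold if and only if n = p^m for some prime p and some natural number m ≥ 2. -/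
open scoped Classical

noncomputable section

/-!
The identity of `C_n` is adjacent to every vertex of its power graph, so all distances are at
most `2` and `Tr v = (n - 1) + #{w ≠ v | w not adjacent to v}`. The bound
`((t - 1) + √((t - 2l + 1)² + 4l(n - l))) / 2` is injective in `t`, so the two equalities force
`Tr_avg = Tr_max`: all non-identity non-generators have the same transmission. In a cyclic group
`x ∈ ⟨y⟩ ↔ ord x ∣ ord y`, so an element of prime order `q` is non-adjacent exactly to the
nonzero elements killed by `n / q ^ v_q(n)`, and its transmission determines `q ^ v_q(n)`; equal
transmissions then leave `n` a single prime divisor. Conversely, for `n = p ^ m` the orders are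
powers of `p`, the power graph is complete, its distance matrix is `J - I` with spectral radius
`n - 1`, every transmission is `n - 1`, and both bounds evaluate to `n - 1`.
-/

open Finset

lemma Nat.totient_add_one_lt_of_not_prime {n : ℕ} (hn : 1 < n) (hnp : ¬n.Prime) :
    n.totient + 1 < n := by
  have := Nat.totient_lt n hn
  have := mt (Nat.totient_eq_iff_prime (by omega)).1 hnp
  omega

lemma Nat.Prime.eq_of_ordCompl_eq {n p q : ℕ} (hp : p.Prime) (hq : q.Prime) (hn : n ≠ 0)
    (hpn : p ∣ n) (h : ordCompl[p] n = ordCompl[q] n) : p = q := by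
  have hpow : p ^ n.factorization p = q ^ n.factorization q := by
    have hp' := Nat.ordProj_mul_ordCompl_eq_self n p
    rw [h] at hp'
    exact Nat.eq_of_mul_eq_mul_right (Nat.ordCompl_pos q hn)
      (hp'.trans (Nat.ordProj_mul_ordCompl_eq_self n q).symm)
  have hpq : p ∣ q ^ n.factorization q :=
    hpow ▸ dvd_pow_self p (hp.factorization_pos_of_dvd hn hpn).ne'
  exact (Nat.prime_dvd_prime_iff_eq hp hq).mp (hp.dvd_of_dvd_pow hpq)

lemma Finset.forall_eq_sup_of_sum_eq_card_mul_sup {α : Type*} {s : Finset α} {f : α → ℕ}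
    (h : ∑ i ∈ s, f i = #s * s.sup f) : ∀ i ∈ s, f i = s.sup f := by
  refine (sum_eq_sum_iff_of_le fun i hi => le_sup hi).1 ?_
  rwa [sum_const, smul_eq_mul]

lemma add_sqrt_sq_add_injective {c : ℝ} (hc : 0 < c) :
    Function.Injective fun s : ℝ => s + √(s ^ 2 + c) := by
  -- `g = s + √(s ^ 2 + c)` is positive and recovers `s` as `(g ^ 2 - c) / (2 * g)`
  have hrecover (s : ℝ) : 0 < s + √(s ^ 2 + c) ∧
      2 * s * (s + √(s ^ 2 + c)) = (s + √(s ^ 2 + c)) ^ 2 - c := by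
    have hsq := Real.sq_sqrt (show 0 ≤ s ^ 2 + c by positivity)
    have habs : |s| < √(s ^ 2 + c) := by
      rw [← Real.sqrt_sq_eq_abs]
      exact Real.sqrt_lt_sqrt (sq_nonneg s) (by linarith)
    exact ⟨by linarith [neg_abs_le s], by linear_combination -hsq⟩
  intro s t hst
  simp only at hst
  obtain ⟨hpos, hs⟩ := hrecover s
  obtain ⟨-, ht⟩ := hrecover t
  rw [hst] at hpos hs
  nlinarith

def distSpectralRadiusBound (N l t : ℝ) : ℝ :=
  ((t - 1) + √((t - 2 * l + 1) ^ 2 + 4 * l * (N - l))) / 2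

lemma distSpectralRadiusBound_injective {N l : ℝ} (hl : 0 < l) (hlN : l < N) :
    Function.Injective (distSpectralRadiusBound N l) := by
  intro s t hst
  have hc : 0 < 4 * l * (N - l) := by nlinarith
  have := add_sqrt_sq_add_injective hc (a₁ := s - 2 * l + 1) (a₂ := t - 2 * l + 1)
    (by simp only [distSpectralRadiusBound] at hst ⊢; linarith)
  linarith

lemma distSpectralRadiusBound_sub_one {N : ℝ} (hN : 0 ≤ N) (l : ℝ) :
    distSpectralRadiusBound N l (N - 1) = N - 1 := by
  rw [distSpectralRadiusBound, show (N - 1 - 2 * l + 1) ^ 2 + 4 * l * (N - l) = N ^ 2 by ring,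
    Real.sqrt_sq hN]
  ring

namespace SimpleGraph

variable {V : Type*} {G : SimpleGraph V} {u : V}

lemma dist_eq_two_of_forall_adj (hu : ∀ w ≠ u, G.Adj u w) {v w : V} (hvw : v ≠ w)
    (hadj : ¬G.Adj v w) : G.dist v w = 2 := by
  have hvu : v ≠ u := by rintro rfl; exact hadj (hu w hvw.symm)
  have hwu : w ≠ u := by rintro rfl; exact hadj (hu v hvw).symm
  let p : G.Walk v w := .cons (hu v hvu).symm (.cons (hu w hwu) .nil)
  have hlt := Reachable.one_lt_dist_of_ne_of_not_adj ⟨p⟩ hvw hadj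
  have hle : G.dist v w ≤ 2 := G.dist_le p
  omega

end SimpleGraph

section Transmission

variable {V : Type*} [Fintype V]

lemma transmission_eq_of_forall_adj [DecidableEq V] {G : SimpleGraph V} [DecidableRel G.Adj]
    {u : V} (hu : ∀ w ≠ u, G.Adj u w) (v : V) :
    transmission G v = (Fintype.card V - 1) + #{w | w ≠ v ∧ ¬G.Adj v w} := by
  have hdist (w : V) : G.dist v w =
      (if w ≠ v then 1 else 0) + (if w ≠ v ∧ ¬G.Adj v w then 1 else 0) := by
    by_cases hwv : w = v
    · simp [hwv]
    by_cases hadj : G.Adj v w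
    · simp [hwv, hadj, SimpleGraph.dist_eq_one_iff_adj.mpr hadj]
    · simp [hwv, hadj, SimpleGraph.dist_eq_two_of_forall_adj hu (Ne.symm hwv) hadj]
  simp only [transmission, hdist, sum_add_distrib, sum_boole, Nat.cast_id]
  rw [filter_ne', card_erase_of_mem (mem_univ v), card_univ]

lemma transmission_top [DecidableEq V] (v : V) :
    transmission (⊤ : SimpleGraph V) v = Fintype.card V - 1 := by
  simp [transmission_eq_of_forall_adj (G := ⊤) (u := v) fun w hw => hw.symm, eq_comm]

lemma sum_distMatrix_row (G : SimpleGraph V) (v : V) :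
    ∑ w, distMatrix G v w = transmission G v := by
  simp [distMatrix, transmission]

end Transmission

lemma Matrix.isGreatest_spectrum_of_nonneg_of_sum_row_eq {ι : Type*} [Fintype ι]
    [DecidableEq ι] [Nonempty ι] {A : Matrix ι ι ℝ} {r : ℝ} (hA : ∀ i j, 0 ≤ A i j)
    (hrow : ∀ i, ∑ j, A i j = r) : IsGreatest (spectrum ℝ A) r := by
  have hspec (μ : ℝ) : μ ∈ spectrum ℝ A ↔ Module.End.HasEigenvalue (Matrix.toLin' A) μ := by
    rw [← Matrix.spectrum_toLin', Module.End.hasEigenvalue_iff_mem_spectrum]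
  refine ⟨(hspec r).2 (Module.End.hasEigenvalue_of_hasEigenvector ⟨?_, one_ne_zero⟩),
    fun μ hμ => ?_⟩
  · rw [Module.End.mem_eigenspace_iff]
    ext i
    simp [Matrix.mulVec, dotProduct, hrow]
  · obtain ⟨k, hk⟩ := eigenvalue_mem_ball ((hspec μ).1 hμ)
    rw [Metric.mem_closedBall, Real.dist_eq] at hk
    simp only [Real.norm_of_nonneg (hA k _)] at hk
    calc μ ≤ A k k + ∑ j ∈ univ.erase k, A k j := by linarith [le_abs_self (μ - A k k)]
      _ = r := by rw [add_sum_erase _ _ (mem_univ k), hrow]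

lemma isGreatest_spectrum_distMatrix_top {V : Type*} [Fintype V] [DecidableEq V] [Nonempty V] :
    IsGreatest (spectrum ℝ (distMatrix (⊤ : SimpleGraph V))) (Fintype.card V - 1) := by
  refine Matrix.isGreatest_spectrum_of_nonneg_of_sum_row_eq (fun _ _ => Nat.cast_nonneg _)
    fun v => ?_
  rw [sum_distMatrix_row, transmission_top, Nat.cast_pred Fintype.card_pos]

section PowerGraph

open AddSubgroup

variable {G : Type*}

lemma addPowerGraph_adj_zero [AddGroup G] {w : G} (hw : w ≠ 0) : (addPowerGraph G).Adj 0 w :=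
  ⟨hw.symm, 0, .inl (zero_smul ℕ w).symm⟩

lemma addPowerGraph_adj_iff [AddGroup G] [Finite G] {x y : G} :
    (addPowerGraph G).Adj x y ↔ x ≠ y ∧ (x ∈ zmultiples y ∨ y ∈ zmultiples x) := by
  simp only [addPowerGraph, ← mem_multiples_iff_mem_zmultiples, AddSubmonoid.mem_multiples_iff,
    exists_or, eq_comm]

variable [AddCommGroup G]

namespace IsAddCyclic

lemma mem_zmultiples_iff_addOrderOf_dvd [Finite G] [IsAddCyclic G] {x y : G} :
    x ∈ zmultiples y ↔ addOrderOf x ∣ addOrderOf y := by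
  refine ⟨addOrderOf_dvd_of_mem_zmultiples, fun hxy => ?_⟩
  set d := addOrderOf x
  have hd : d ≠ 0 := (addOrderOf_pos x).ne'
  set z := (addOrderOf y / d) • y
  have hz : addOrderOf z = d := by
    have hy : addOrderOf y ≠ 0 := (addOrderOf_pos y).ne'
    rw [addOrderOf_nsmul_of_dvd (Nat.div_pos (Nat.le_of_dvd (Nat.pos_of_ne_zero hy) hxy)
      (Nat.pos_of_ne_zero hd)).ne' (Nat.div_dvd_of_dvd hxy), Nat.div_div_self hxy hy]
  -- the elements killed by `d` form a subgroup of order `d`, so they are the multiples of `z`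
  have hker : zmultiples z = (nsmulAddMonoidHom d : G →+ G).ker := by
    apply AddSubgroup.eq_of_le_of_card_ge
    · rw [zmultiples_le, AddMonoidHom.mem_ker, nsmulAddMonoidHom_apply, ← hz,
        addOrderOf_nsmul_eq_zero]
    · rw [IsAddCyclic.card_nsmulAddMonoidHom_ker, Nat.card_zmultiples, hz]
      exact Nat.gcd_le_right _ (Nat.pos_of_ne_zero hd)
  have hx : x ∈ zmultiples z := by
    rw [hker, AddMonoidHom.mem_ker, nsmulAddMonoidHom_apply, addOrderOf_nsmul_eq_zero]
  exact zmultiples_le_of_mem (nsmul_mem_zmultiples y _) hx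

variable [Fintype G] [IsAddCyclic G]

lemma addPowerGraph_adj_iff {x y : G} : (addPowerGraph G).Adj x y ↔
    x ≠ y ∧ (addOrderOf x ∣ addOrderOf y ∨ addOrderOf y ∣ addOrderOf x) := by
  simp only [_root_.addPowerGraph_adj_iff, mem_zmultiples_iff_addOrderOf_dvd]

lemma addPowerGraph_eq_top {p m : ℕ} (hp : p.Prime) (hG : Fintype.card G = p ^ m) :
    addPowerGraph G = ⊤ := by
  ext x y
  have hpow (z : G) : ∃ i, addOrderOf z = p ^ i := by
    obtain ⟨i, -, hi⟩ := (Nat.dvd_prime_pow hp).mp (hG ▸ addOrderOf_dvd_card)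
    exact ⟨i, hi⟩
  obtain ⟨i, hi⟩ := hpow x
  obtain ⟨j, hj⟩ := hpow y
  rw [addPowerGraph_adj_iff, hi, hj, SimpleGraph.top_adj]
  exact and_iff_left ((le_total i j).imp (pow_dvd_pow p) (pow_dvd_pow p))

lemma card_filter_nsmul_eq_zero [DecidableEq G] {d : ℕ} (hd : d ∣ Fintype.card G) :
    #{w : G | d • w = 0} = d := by
  calc #{w : G | d • w = 0} = Nat.card (nsmulAddMonoidHom d : G →+ G).ker := by
        rw [Nat.card_eq_fintype_card, Fintype.card_subtype]
        simp
    _ = d := by rw [card_nsmulAddMonoidHom_ker, Nat.card_eq_fintype_card, Nat.gcd_eq_right hd]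

lemma card_filter_ne_zero_addOrderOf_ne_add [DecidableEq G] (hG : 2 ≤ Fintype.card G) :
    #{v : G | v ≠ 0 ∧ addOrderOf v ≠ Fintype.card G} + (Fintype.card G).totient + 1 =
      Fintype.card G := by
  have hgen : #{v : G | ¬(v ≠ 0 ∧ addOrderOf v ≠ Fintype.card G)} =
      (Fintype.card G).totient + 1 := by
    have h0 : (0 : G) ∉ ({v | addOrderOf v = Fintype.card G} : Finset G) := by
      simp only [mem_filter, mem_univ, true_and, addOrderOf_zero]
      omega
    rw [← card_addOrderOf_eq_totient dvd_rfl, ← card_insert_of_notMem h0]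
    congr 1
    ext v
    simp only [mem_filter, mem_univ, true_and, mem_insert]
    tauto
  rw [add_assoc, ← hgen, card_filter_add_card_filter_not, card_univ]

lemma addPowerGraph_nonadj_iff_of_addOrderOf_prime {q : ℕ} (hq : q.Prime) {a : G}
    (ha : addOrderOf a = q) (w : G) :
    w ≠ a ∧ ¬(addPowerGraph G).Adj a w ↔
      w ≠ 0 ∧ ordCompl[q] (Fintype.card G) • w = 0 := by
  have hcompl : addOrderOf w ∣ ordCompl[q] (Fintype.card G) ↔ ¬q ∣ addOrderOf w :=
    ⟨fun h hqw => Nat.not_dvd_ordCompl hq Fintype.card_ne_zero (hqw.trans h),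
      Nat.dvd_ordCompl_of_dvd_not_dvd addOrderOf_dvd_card⟩
  have hwa : w = a → addOrderOf w = q := fun h => h ▸ ha
  have hwq : addOrderOf w = q → q ∣ addOrderOf w := fun h => h ▸ dvd_rfl
  rw [← addOrderOf_dvd_iff_nsmul_eq_zero, hcompl, addPowerGraph_adj_iff, ha, Nat.dvd_prime hq,
    AddMonoid.addOrderOf_eq_one_iff]
  tauto

lemma transmission_addPowerGraph_of_addOrderOf_prime [DecidableEq G] {q : ℕ} (hq : q.Prime)
    {a : G} (ha : addOrderOf a = q) :
    transmission (addPowerGraph G) a =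
      (Fintype.card G - 1) + (ordCompl[q] (Fintype.card G) - 1) := by
  rw [transmission_eq_of_forall_adj (u := 0) (fun w hw => addPowerGraph_adj_zero hw),
    filter_congr fun w _ => addPowerGraph_nonadj_iff_of_addOrderOf_prime hq ha w,
    ← filter_filter, filter_ne', filter_erase, card_erase_of_mem (by simp),
    card_filter_nsmul_eq_zero (Nat.ordCompl_dvd _ _)]

lemma eq_of_prime_dvd_card_of_transmission_eq [DecidableEq G] (hG : ¬(Fintype.card G).Prime)
    {T : ℕ} (htr : ∀ v : G, v ≠ 0 → addOrderOf v ≠ Fintype.card G →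
      transmission (addPowerGraph G) v = T)
    {p q : ℕ} (hp : p.Prime) (hq : q.Prime) (hpG : p ∣ Fintype.card G)
    (hqG : q ∣ Fintype.card G) : p = q := by
  have hcompl {r : ℕ} (hr : r.Prime) (hrG : r ∣ Fintype.card G) :
      (Fintype.card G - 1) + (ordCompl[r] (Fintype.card G) - 1) = T := by
    have := Fact.mk hr
    obtain ⟨a, ha⟩ := exists_prime_addOrderOf_dvd_card r hrG
    rw [← transmission_addPowerGraph_of_addOrderOf_prime hr ha]
    refine htr a ?_ (ha ▸ fun h => hG (h ▸ hr))
    rw [ne_eq, ← AddMonoid.addOrderOf_eq_one_iff, ha]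
    exact hr.one_lt.ne'
  have hpos := Nat.ordCompl_pos p (Fintype.card_ne_zero (α := G))
  have hpos' := Nat.ordCompl_pos q (Fintype.card_ne_zero (α := G))
  have hpq := (hcompl hp hpG).trans (hcompl hq hqG).symm
  exact hp.eq_of_ordCompl_eq hq Fintype.card_ne_zero hpG (by omega)

end IsAddCyclic

end PowerGraph

namespace ZMod

variable {n : ℕ} [NeZero n]

lemma cast_card_filter_ne_zero_addOrderOf_ne (hn : 2 ≤ n) :
    (#{v : ZMod n | v ≠ 0 ∧ addOrderOf v ≠ n} : ℝ) = n - (n.totient + 1) := by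
  have hcard := IsAddCyclic.card_filter_ne_zero_addOrderOf_ne_add (G := ZMod n)
    (by rwa [ZMod.card])
  simp only [ZMod.card] at hcard
  rw [eq_sub_iff_add_eq, ← add_assoc]
  exact_mod_cast hcard

lemma exists_prime_pow_of_transmission_eq (hn : 3 ≤ n) (hnp : ¬n.Prime) {T : ℕ}
    (htr : ∀ v : ZMod n, v ≠ 0 → addOrderOf v ≠ n →
      transmission (addPowerGraph (ZMod n)) v = T) :
    ∃ p m : ℕ, p.Prime ∧ 2 ≤ m ∧ n = p ^ m := by
  have hp : n.minFac.Prime := Nat.minFac_prime (by omega)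
  have hunique {q : ℕ} (hq : q.Prime) (hqn : q ∣ n) : q = n.minFac :=
    IsAddCyclic.eq_of_prime_dvd_card_of_transmission_eq (by rwa [ZMod.card])
      (by simpa only [ZMod.card] using htr) hq hp (by rwa [ZMod.card])
      (by rw [ZMod.card]; exact Nat.minFac_dvd n)
  have hpow := Nat.eq_prime_pow_of_unique_prime_dvd (NeZero.ne n) hunique
  refine ⟨n.minFac, _, hp, ?_, hpow⟩
  by_contra! hlen
  interval_cases h : n.primeFactorsList.length
  · rw [pow_zero] at hpow
    omega
  · rw [pow_one] at hpow
    exact hnp (hpow ▸ hp)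

lemma transmission_addPowerGraph_of_prime_pow {p m : ℕ} (hp : p.Prime) (hn : n = p ^ m) :
    transmission (addPowerGraph (ZMod n)) = fun _ => n - 1 := by
  rw [IsAddCyclic.addPowerGraph_eq_top hp ((ZMod.card n).trans hn)]
  exact funext fun v => by rw [transmission_top, ZMod.card]

lemma isGreatest_spectrum_distMatrix_addPowerGraph_of_prime_pow {p m : ℕ} (hp : p.Prime)
    (hn : n = p ^ m) :
    IsGreatest (spectrum ℝ (distMatrix (addPowerGraph (ZMod n)))) (n - 1) := by
  rw [IsAddCyclic.addPowerGraph_eq_top hp ((ZMod.card n).trans hn)]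
  simpa only [ZMod.card] using isGreatest_spectrum_distMatrix_top (V := ZMod n)

end ZMod

/-- Equality holds in both distance-spectral-radius bounds for the power graph of `ZMod n`
if and only if `n` is a prime power `p ^ m` with `m ≥ 2`. -/
theorem distSpectralRadius_powerGraph_cyclic_eq_iff
    (n : ℕ) [NeZero n] (hn : 3 ≤ n) (hnp : ¬ n.Prime) (rho l travg trmax : ℝ)
    (hrho : IsGreatest (spectrum ℝ (distMatrix (addPowerGraph (ZMod n)))) rho)
    (hl : l = (Nat.totient n : ℝ) + 1)
    (htravg : travg =
      (∑ v ∈ Finset.univ.filter (fun v : ZMod n => v ≠ 0 ∧ addOrderOf v ≠ n),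
        (transmission (addPowerGraph (ZMod n)) v : ℝ)) / ((n : ℝ) - l))
    (htrmax : trmax =
      (((Finset.univ.filter (fun v : ZMod n => v ≠ 0 ∧ addOrderOf v ≠ n)).sup
        (transmission (addPowerGraph (ZMod n))) : ℕ) : ℝ)) :
    (rho = ((travg - 1) + Real.sqrt ((travg - 2 * l + 1) ^ 2 + 4 * l * ((n : ℝ) - l))) / 2 ∧
     rho = ((trmax - 1) + Real.sqrt ((trmax - 2 * l + 1) ^ 2 + 4 * l * ((n : ℝ) - l))) / 2)
    ↔ ∃ p m : ℕ, p.Prime ∧ 2 ≤ m ∧ n = p ^ m := by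
  set V₂ := univ.filter fun v : ZMod n => v ≠ 0 ∧ addOrderOf v ≠ n
  set Tr := transmission (addPowerGraph (ZMod n))
  have htot := Nat.totient_add_one_lt_of_not_prime (by omega) hnp
  have hnl : (n : ℝ) - l = #V₂ := by
    rw [hl, ZMod.cast_card_filter_ne_zero_addOrderOf_ne (by omega)]
  have hV₂ : (0 : ℝ) < #V₂ := by
    rw [← hnl, hl, sub_pos]
    exact_mod_cast htot
  have hsum : ∑ v ∈ V₂, (Tr v : ℝ) = #V₂ * travg := by
    rw [htravg, hnl, mul_div_cancel₀ _ hV₂.ne']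
  change rho = distSpectralRadiusBound n l travg ∧ rho = distSpectralRadiusBound n l trmax ↔ _
  constructor
  · rintro ⟨hrho_avg, hrho_max⟩
    have heq : travg = trmax := distSpectralRadiusBound_injective (by rw [hl]; positivity)
      (by rw [hl]; exact_mod_cast htot) (hrho_avg.symm.trans hrho_max)
    have hsumT : ((∑ v ∈ V₂, Tr v : ℕ) : ℝ) = (#V₂ * V₂.sup Tr : ℕ) := by
      push_cast
      rw [hsum, heq, htrmax]
    have hconst := forall_eq_sup_of_sum_eq_card_mul_sup (by exact_mod_cast hsumT)
    exact ZMod.exists_prime_pow_of_transmission_eq hn hnp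
      fun v hv hvn => hconst v (mem_filter.2 ⟨mem_univ v, hv, hvn⟩)
  · rintro ⟨p, m, hp, -, hnpm⟩
    have hTr : Tr = fun _ => n - 1 := ZMod.transmission_addPowerGraph_of_prime_pow hp hnpm
    have hrho' : rho = n - 1 :=
      hrho.unique (ZMod.isGreatest_spectrum_distMatrix_addPowerGraph_of_prime_pow hp hnpm)
    have htravg : travg = n - 1 := by
      rw [hTr, sum_const, nsmul_eq_mul, Nat.cast_pred (NeZero.pos n)] at hsum
      exact mul_left_cancel₀ hV₂.ne' hsum.symm
    have htrmax : trmax = n - 1 := by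
      rw [htrmax, hTr, sup_const (card_pos.1 (by exact_mod_cast hV₂)),
        Nat.cast_pred (NeZero.pos n)]
    rw [hrho', htravg, htrmax, distSpectralRadiusBound_sub_one (Nat.cast_nonneg n)]
    exact ⟨rfl, rfl⟩
end
end

section
/- Let p and q be distinct primes and let ρ₁ be the distance spectral radius of the power graph P(Z_{pq}) of the cyclic group ZMod (p·q). Then ρ₁ satisfies the cubic equation ρ₁³ − (pq − 3)·ρ₁² − (5pq − 3p − 3q)·ρ₁ + (p²q² − 2p²q − 2pq² + p² + pq + q²) = 0. -/
open scoped Classical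

noncomputable section

/-!
Sort the elements of `ZMod (p * q)` by additive order: the `p - 1` elements of order `p`, the
`q - 1` elements of order `q`, and the rest (`0` and the generators). In a cyclic group `x` is a
multiple of `y` iff the order of `x` divides that of `y`, so two distinct vertices are adjacent
unless one has order `p` and the other order `q`; such a pair has the common neighbour `0`, hence
distance `2`. Thus `D + 1` is constant on the blocks of this three-part partition. Summing an
eigenvector of `D` for `ρ` over the parts gives an eigenvector of the `3 × 3` quotient matrix for
`ρ + 1`, provided `ρ + 1 ≠ 0`; this holds because `trace D = 0` forces `ρ ≥ 0`. The cubic is the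
characteristic polynomial of the quotient matrix evaluated at `ρ + 1`.
-/

open Finset Matrix

namespace Matrix

variable {n : Type*} [Fintype n] [DecidableEq n]

lemma exists_mulVec_eq_smul_of_mem_spectrum_s15 {K : Type*} [Field K] {A : Matrix n n K} {μ : K}
    (h : μ ∈ spectrum K A) : ∃ v ≠ 0, A *ᵥ v = μ • v := by
  rw [← spectrum_toLin', ← Module.End.hasEigenvalue_iff_mem_spectrum] at h
  obtain ⟨v, hv⟩ := h.exists_hasEigenvector
  exact ⟨v, hv.2, by simpa using hv.apply_eq_smul⟩

lemma IsHermitian.trace_le_card_mul_of_isGreatest_spectrum {A : Matrix n n ℝ}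
    (hA : A.IsHermitian) {ρ : ℝ} (hρ : IsGreatest (spectrum ℝ A) ρ) :
    A.trace ≤ Fintype.card n * ρ := by
  rw [hA.trace_eq_sum_eigenvalues, ← nsmul_eq_mul, ← card_univ, ← sum_const]
  exact sum_le_sum fun i _ ↦ hρ.2 (hA.eigenvalues_mem_spectrum_real i)

variable {V ι K : Type*} [Fintype V] [Fintype ι] [DecidableEq ι] [Field K]

/-- The quotient matrix of the partition of `V` into the fibres of `k`. -/
def quotientMatrix (B : Matrix ι ι K) (k : V → ι) : Matrix ι ι K :=
  diagonal (fun i ↦ (#{x | k x = i} : K)) * B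

lemma submatrix_mulVec_eq_mulVec_sum_fiberwise (B : Matrix ι ι K) (k : V → ι) (v : V → K)
    (x : V) : (B.submatrix k k *ᵥ v) x = (B *ᵥ fun i ↦ ∑ y with k y = i, v y) (k x) := by
  simp only [mulVec, dotProduct, submatrix_apply, mul_sum]
  rw [← sum_fiberwise univ k]
  refine sum_congr rfl fun i _ ↦ sum_congr rfl fun y hy ↦ ?_
  rw [(mem_filter.mp hy).2]

lemma det_quotientMatrix_sub_smul_eq_zero (B : Matrix ι ι K) (k : V → ι) {v : V → K}
    (hv : v ≠ 0) {μ : K} (hμ : μ ≠ 0) (h : B.submatrix k k *ᵥ v = μ • v) :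
    (B.quotientMatrix k - μ • 1).det = 0 := by
  set s : ι → K := fun i ↦ ∑ y with k y = i, v y
  have hrow (x : V) : μ * v x = (B *ᵥ s) (k x) := by
    rw [← submatrix_mulVec_eq_mulVec_sum_fiberwise, h, Pi.smul_apply, smul_eq_mul]
  have hs : s ≠ 0 := fun hs ↦ hv (funext fun x ↦ by simpa [hs, hμ] using hrow x)
  have hQs : B.quotientMatrix k *ᵥ s = μ • s := by
    ext i
    simp only [quotientMatrix, ← mulVec_mulVec, mulVec_diagonal, Pi.smul_apply, smul_eq_mul, s,
      mul_sum]
    rw [← nsmul_eq_mul, ← sum_const]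
    refine sum_congr rfl fun x hx ↦ ?_
    rw [hrow, (mem_filter.mp hx).2]
  refine exists_mulVec_eq_zero_iff.mp ⟨s, hs, ?_⟩
  rw [sub_mulVec, hQs, smul_mulVec, one_mulVec, sub_self]

end Matrix

section DistMatrix

variable {V : Type*}

lemma SimpleGraph.dist_eq_two_of_forall_adj_s15 {G : SimpleGraph V} {c : V}
    (hc : ∀ v, v ≠ c → G.Adj c v) {x y : V} (hxy : x ≠ y) (h : ¬G.Adj x y) : G.dist x y = 2 := by
  have hx : x ≠ c := by rintro rfl; exact h (hc y hxy.symm)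
  have hy : y ≠ c := by rintro rfl; exact h (hc x hxy).symm
  let w : G.Walk x y := .cons (hc x hx).symm (.cons (hc y hy) .nil)
  have hle : G.dist x y ≤ 2 := dist_le w
  have hne0 : G.dist x y ≠ 0 := dist_ne_zero_iff_ne_and_reachable.mpr ⟨hxy, ⟨w⟩⟩
  have hne1 : G.dist x y ≠ 1 := mt dist_eq_one_iff_adj.mp h
  omega

variable [Fintype V]

lemma distMatrix_isHermitian (G : SimpleGraph V) : (distMatrix G).IsHermitian := by
  ext x y
  simp [distMatrix, SimpleGraph.dist_comm]

lemma trace_distMatrix (G : SimpleGraph V) : (distMatrix G).trace = 0 := by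
  simp [Matrix.trace, distMatrix]

lemma distMatrix_add_one_of_forall_adj [DecidableEq V] {G : SimpleGraph V} {c : V}
    (hc : ∀ v, v ≠ c → G.Adj c v) :
    distMatrix G + 1 = of fun x y ↦ if G.Adj x y ∨ x = y then 1 else 2 := by
  ext x y
  simp only [Matrix.add_apply, one_apply, of_apply, distMatrix]
  by_cases hxy : x = y
  · simp [hxy]
  by_cases hadj : G.Adj x y
  · simp [hxy, hadj, SimpleGraph.dist_eq_one_iff_adj.mpr hadj]
  · simp [hxy, hadj, SimpleGraph.dist_eq_two_of_forall_adj_s15 hc hxy hadj]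

end DistMatrix

section AddPowerGraph

variable {G : Type*} [AddGroup G]

lemma exists_nsmul_eq_iff_addOrderOf_dvd [Fintype G] [IsAddCyclic G] (x y : G) :
    (∃ m : ℕ, x = m • y) ↔ addOrderOf x ∣ addOrderOf y := by
  refine ⟨fun ⟨m, hm⟩ ↦ hm ▸ addOrderOf_smul_dvd m, fun h ↦ ?_⟩
  have hy : 0 < addOrderOf y := addOrderOf_pos y
  set S : Finset G := {a | addOrderOf y • a = 0}
  -- `S` has at most `addOrderOf y` elements in a cyclic group, so the multiples of `y` fill it.
  have hsub : (range (addOrderOf y)).image (· • y) ⊆ S := by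
    intro a ha
    obtain ⟨m, -, rfl⟩ := mem_image.mp ha
    simp [S, smul_comm (addOrderOf y) m y, addOrderOf_nsmul_eq_zero]
  have hcard : #S ≤ #((range (addOrderOf y)).image (· • y)) := by
    rw [card_image_of_injOn (by simpa using nsmul_injOn_Iio_addOrderOf (x := y)), card_range]
    exact IsAddCyclic.card_nsmul_eq_zero_le hy
  have hx : x ∈ S := by
    simpa [S] using addOrderOf_dvd_iff_nsmul_eq_zero.mp h
  obtain ⟨m, -, hm⟩ := mem_image.mp (eq_of_subset_of_card_le hsub hcard ▸ hx)
  exact ⟨m, hm.symm⟩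

lemma addPowerGraph_adj_zero_s15 {x : G} (hx : x ≠ 0) : (addPowerGraph G).Adj 0 x :=
  ⟨hx.symm, 0, Or.inl (zero_smul ℕ x).symm⟩

lemma addPowerGraph_adj_iff_s15 [Fintype G] [IsAddCyclic G] {x y : G} :
    (addPowerGraph G).Adj x y ↔
      x ≠ y ∧ (addOrderOf x ∣ addOrderOf y ∨ addOrderOf y ∣ addOrderOf x) := by
  simp only [addPowerGraph, exists_or, exists_nsmul_eq_iff_addOrderOf_dvd]

end AddPowerGraph

lemma ZMod.addOrderOf_dvd {n : ℕ} (x : ZMod n) : addOrderOf x ∣ n :=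
  addOrderOf_dvd_of_nsmul_eq_zero (by simp [nsmul_eq_mul])

lemma Nat.eq_one_or_eq_or_eq_or_eq_mul_of_dvd_mul {p q d : ℕ} (hp : p.Prime) (hq : q.Prime)
    (h : d ∣ p * q) : d = 1 ∨ d = p ∨ d = q ∨ d = p * q := by
  obtain ⟨a, b, ha, hb, rfl⟩ := Nat.dvd_mul.mp h
  rcases (Nat.dvd_prime hp).mp ha with rfl | rfl <;>
    rcases (Nat.dvd_prime hq).mp hb with rfl | rfl <;> simp

lemma Nat.dvd_or_dvd_iff_of_dvd_mul {p q a b : ℕ} (hp : p.Prime) (hq : q.Prime) (hpq : p ≠ q)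
    (ha : a ∣ p * q) (hb : b ∣ p * q) :
    (a ∣ b ∨ b ∣ a) ↔ ¬(a = p ∧ b = q ∨ a = q ∧ b = p) := by
  have hpq' : ¬p ∣ q := fun h ↦ hpq ((Nat.prime_dvd_prime_iff_eq hp hq).mp h)
  have hqp' : ¬q ∣ p := fun h ↦ hpq ((Nat.prime_dvd_prime_iff_eq hq hp).mp h).symm
  refine ⟨by rintro h (⟨rfl, rfl⟩ | ⟨rfl, rfl⟩) <;> tauto, fun h ↦ ?_⟩
  rcases Nat.eq_one_or_eq_or_eq_or_eq_mul_of_dvd_mul hp hq ha with rfl | rfl | rfl | rfl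
  · exact .inl (one_dvd b)
  · rcases Nat.eq_one_or_eq_or_eq_or_eq_mul_of_dvd_mul hp hq hb with rfl | rfl | rfl | rfl
    · exact .inr (one_dvd _)
    · exact .inl dvd_rfl
    · tauto
    · exact .inl (dvd_mul_right _ _)
  · rcases Nat.eq_one_or_eq_or_eq_or_eq_mul_of_dvd_mul hp hq hb with rfl | rfl | rfl | rfl
    · exact .inr (one_dvd _)
    · tauto
    · exact .inl dvd_rfl
    · exact .inl (dvd_mul_left _ _)
  · exact .inr hb

def pqBlock : Matrix (Fin 3) (Fin 3) ℝ := fun i j ↦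
  if i = 1 ∧ j = 2 ∨ i = 2 ∧ j = 1 then 2 else 1

section PowerGraphZModPQ

variable {p q : ℕ}

variable (p q) in
def pqClass (x : ZMod (p * q)) : Fin 3 :=
  if addOrderOf x = p then 1 else if addOrderOf x = q then 2 else 0

lemma pqClass_eq_one_iff (x : ZMod (p * q)) : pqClass p q x = 1 ↔ addOrderOf x = p := by
  unfold pqClass
  split_ifs <;> simp_all

lemma pqClass_eq_two_iff (hpq : p ≠ q) (x : ZMod (p * q)) :
    pqClass p q x = 2 ↔ addOrderOf x = q := by
  unfold pqClass
  split_ifs <;> simp_all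

variable [Fact p.Prime] [Fact q.Prime]

lemma distMatrix_addPowerGraph_add_one (hpq : p ≠ q) :
    distMatrix (addPowerGraph (ZMod (p * q))) + 1 =
      pqBlock.submatrix (pqClass p q) (pqClass p q) := by
  rw [distMatrix_add_one_of_forall_adj (c := 0) fun _ ↦ addPowerGraph_adj_zero_s15]
  ext x y
  simp only [of_apply, submatrix_apply, pqBlock, addPowerGraph_adj_iff_s15,
    Nat.dvd_or_dvd_iff_of_dvd_mul Fact.out Fact.out hpq (ZMod.addOrderOf_dvd x)
      (ZMod.addOrderOf_dvd y), pqClass_eq_one_iff, pqClass_eq_two_iff hpq]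
  by_cases hxy : x = y
  · subst hxy
    have : addOrderOf x = p → addOrderOf x ≠ q := fun h h' ↦ hpq (h.symm.trans h')
    simp only [ne_eq, not_true_eq_false, false_and, or_true]
    split_ifs <;> tauto
  · split_ifs <;> tauto

lemma card_pqClass_eq_one : #{x : ZMod (p * q) | pqClass p q x = 1} = p - 1 := by
  simp_rw [pqClass_eq_one_iff]
  rw [IsAddCyclic.card_addOrderOf_eq_totient (by simp), Nat.totient_prime Fact.out]

lemma card_pqClass_eq_two (hpq : p ≠ q) : #{x : ZMod (p * q) | pqClass p q x = 2} = q - 1 := by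
  simp_rw [pqClass_eq_two_iff hpq]
  rw [IsAddCyclic.card_addOrderOf_eq_totient (by simp), Nat.totient_prime Fact.out]

lemma card_pqClass_eq_zero (hpq : p ≠ q) :
    #{x : ZMod (p * q) | pqClass p q x = 0} + p + q = p * q + 2 := by
  have h := card_eq_sum_card_fiberwise (s := univ) (t := univ) (f := pqClass p q) (by simp)
  rw [card_univ, ZMod.card, Fin.sum_univ_three, card_pqClass_eq_one, card_pqClass_eq_two hpq] at h
  have := (Fact.out : p.Prime).one_lt
  have := (Fact.out : q.Prime).one_lt
  omega

lemma det_quotientMatrix_pqBlock_sub_smul (hpq : p ≠ q) (ρ : ℝ) :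
    (pqBlock.quotientMatrix (pqClass p q) - (ρ + 1) • 1).det =
      -(ρ ^ 3 - ((p : ℝ) * q - 3) * ρ ^ 2 - (5 * (p : ℝ) * q - 3 * p - 3 * q) * ρ +
        ((p : ℝ) ^ 2 * q ^ 2 - 2 * p ^ 2 * q - 2 * p * q ^ 2 + p ^ 2 + p * q + q ^ 2)) := by
  have h0 : (#{x : ZMod (p * q) | pqClass p q x = 0} : ℝ) = p * q + 2 - p - q := by
    have := card_pqClass_eq_zero hpq
    rify at this
    linarith
  have h1 : (#{x : ZMod (p * q) | pqClass p q x = 1} : ℝ) = p - 1 := by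
    rw [card_pqClass_eq_one, Nat.cast_sub (Fact.out : p.Prime).one_le, Nat.cast_one]
  have h2 : (#{x : ZMod (p * q) | pqClass p q x = 2} : ℝ) = q - 1 := by
    rw [card_pqClass_eq_two hpq, Nat.cast_sub (Fact.out : q.Prime).one_le, Nat.cast_one]
  simp only [quotientMatrix, det_fin_three, Matrix.sub_apply, diagonal_mul, Matrix.smul_apply,
    smul_eq_mul, pqBlock, h0, h1, h2, Fin.isValue, Fin.reduceEq, one_apply_eq, one_apply_ne, ne_eq,
    not_false_eq_true, zero_ne_one, one_ne_zero, and_self, and_false, and_true, or_self,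
    or_false, or_true, ↓reduceIte]
  ring

end PowerGraphZModPQ

/-- The distance spectral radius of the power graph of `ZMod (p * q)` (`p, q` distinct
primes) is a root of the stated cubic. -/
theorem distSpectralRadius_powerGraph_zmod_pq_cubic
    (p q : ℕ) [Fact p.Prime] [Fact q.Prime] (hpq : p ≠ q) (rho : ℝ)
    (hrho : IsGreatest (spectrum ℝ (distMatrix (addPowerGraph (ZMod (p * q))))) rho) :
    rho ^ 3 - ((p : ℝ) * q - 3) * rho ^ 2 - (5 * (p : ℝ) * q - 3 * p - 3 * q) * rho +
      ((p : ℝ) ^ 2 * q ^ 2 - 2 * p ^ 2 * q - 2 * p * q ^ 2 + p ^ 2 + p * q + q ^ 2) = 0 := by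
  obtain ⟨v, hv, hDv⟩ := exists_mulVec_eq_smul_of_mem_spectrum_s15 hrho.1
  have hrho_nonneg : 0 ≤ rho := by
    have := (distMatrix_isHermitian _).trace_le_card_mul_of_isGreatest_spectrum hrho
    rw [trace_distMatrix] at this
    exact nonneg_of_mul_nonneg_right this (by exact_mod_cast Fintype.card_pos)
  have hBv : pqBlock.submatrix (pqClass p q) (pqClass p q) *ᵥ v = (rho + 1) • v := by
    rw [← distMatrix_addPowerGraph_add_one hpq, add_mulVec, hDv, one_mulVec, add_smul, one_smul]
  have hdet := det_quotientMatrix_sub_smul_eq_zero _ _ hv (by positivity) hBv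
  rw [det_quotientMatrix_pqBlock_sub_smul hpq] at hdet
  exact neg_eq_zero.mp hdet
end
end
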